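/- arXiv:2002.07258 — 2 statements merged into one kernel-verified Lean document; each statement's English description precedes it below -/
import Mathlib

section
/- Let θ, θ̂ ∈ ℝ^d, σ² ∈ (ℝ≥0 ∪ {∞})^d, X ⊆ {0,1}^d finite nonempty, x* ∈ argmax_{x∈X} θᵀx, and x ∈ X with gap Δ_x = θᵀx* − θᵀx > 0. Suppose: (i) θᵀx* ≤ θ̂ᵀx* + √(σ²ᵀx*); (ii) for constants ε ∈ (0,1], δ ≥ 0: max_{y∈X}{θ̂ᵀy + √(σ²ᵀy)} ≤ δ + θ̂ᵀx + (1/ε)√(σ²ᵀx); (iii) θ̂ᵀx ≤ θᵀx + Δ_x/2; (iv) δ ≤ Δ_x/4. Then Δ_x ≤ (4/ε)√(σ²ᵀx). -/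
theorem sub_le_four_mul_of_index_le {K : Type*} [Field K] [LinearOrder K] [IsStrictOrderedRing K]
    {rStar r rhatStar rhat bonusStar bonus δ : K}
    (h_opt : rStar ≤ rhatStar + bonusStar)
    (h_choice : rhatStar + bonusStar ≤ δ + rhat + bonus)
    (h_est : rhat ≤ r + (rStar - r) / 2)
    (h_approx : δ ≤ (rStar - r) / 4) :
    rStar - r ≤ 4 * bonus := by
  have h_chain : rStar ≤ r + 3 / 4 * (rStar - r) + bonus := by
    calc rStar ≤ δ + rhat + bonus := h_opt.trans h_choice
      _ ≤ (rStar - r) / 4 + (r + (rStar - r) / 2) + bonus := by gcongr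
      _ = r + 3 / 4 * (rStar - r) + bonus := by ring
  linarith

theorem aescb_gap_bound_general (d : ℕ) (θ θhat σsq : Fin d → ℝ)
    (X : Finset (Fin d → ℝ))
    (xstar : Fin d → ℝ) (hxstar : xstar ∈ X)
    (x : Fin d → ℝ)
    (Δ : ℝ) (hΔ : Δ = ∑ i, θ i * xstar i - ∑ i, θ i * x i)
    (ε δ : ℝ)
    (h1 : ∑ i, θ i * xstar i ≤ ∑ i, θhat i * xstar i + Real.sqrt (∑ i, σsq i * xstar i))
    (h2 : ∀ y ∈ X, ∑ i, θhat i * y i + Real.sqrt (∑ i, σsq i * y i)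
            ≤ δ + ∑ i, θhat i * x i + (1 / ε) * Real.sqrt (∑ i, σsq i * x i))
    (h3 : ∑ i, θhat i * x i ≤ ∑ i, θ i * x i + Δ / 2)
    (h4 : δ ≤ Δ / 4) :
    Δ ≤ (4 / ε) * Real.sqrt (∑ i, σsq i * x i) := by
  subst hΔ
  calc _ ≤ 4 * ((1 / ε) * Real.sqrt (∑ i, σsq i * x i)) :=
        sub_le_four_mul_of_index_le h1 (h2 xstar hxstar) h3 h4
    _ = (4 / ε) * Real.sqrt (∑ i, σsq i * x i) := by ring

/-- Key event implication in the regret analysis of AESCB. -/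
theorem aescb_gap_bound (d : ℕ) (θ θhat σsq : Fin d → ℝ)
    (hσ : ∀ i, 0 ≤ σsq i)
    (X : Finset (Fin d → ℝ)) (hXne : X.Nonempty)
    (hXbin : ∀ x ∈ X, ∀ i, x i = 0 ∨ x i = 1)
    (xstar : Fin d → ℝ) (hxstar : xstar ∈ X)
    (hopt : ∀ y ∈ X, ∑ i, θ i * y i ≤ ∑ i, θ i * xstar i)
    (x : Fin d → ℝ) (hx : x ∈ X)
    (Δ : ℝ) (hΔ : Δ = ∑ i, θ i * xstar i - ∑ i, θ i * x i) (hΔpos : 0 < Δ)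
    (ε δ : ℝ) (hε0 : 0 < ε) (hε1 : ε ≤ 1) (hδ : 0 ≤ δ)
    (h1 : ∑ i, θ i * xstar i ≤ ∑ i, θhat i * xstar i + Real.sqrt (∑ i, σsq i * xstar i))
    (h2 : ∀ y ∈ X, ∑ i, θhat i * y i + Real.sqrt (∑ i, σsq i * y i)
            ≤ δ + ∑ i, θhat i * x i + (1 / ε) * Real.sqrt (∑ i, σsq i * x i))
    (h3 : ∑ i, θhat i * x i ≤ ∑ i, θ i * x i + Δ / 2)
    (h4 : δ ≤ Δ / 4) :
    Δ ≤ (4 / ε) * Real.sqrt (∑ i, σsq i * x i) :=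
  aescb_gap_bound_general d θ θhat σsq X xstar hxstar x Δ hΔ ε δ h1 h2 h3 h4
end

section
/- Let X ⊆ {0,1}^d be finite nonempty, a ∈ ℕ^d, b ∈ ℝ_{≥0}^d, S = {0,...,N} with aᵀx ∈ S for all x ∈ X, and ε ∈ (0,1]. Suppose for each s ∈ S there exists x̄^s ∈ X with aᵀx̄^s ≥ s and bᵀx̄^s ≥ ε · max{bᵀx : x ∈ X, aᵀx ≥ s}. Let s* ∈ argmax_{s∈S} { s + (1/ε)√(bᵀx̄^s) }. Then max_{x∈X} { aᵀx + √(bᵀx) } ≤ aᵀx̄^{s*} + (1/ε)√(bᵀx̄^{s*}). -/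
open Finset

/-!
For `x ∈ X` with budget `s = aᵀx`, the point `x` is feasible for the budgeted problem at `s`,
so `ε · bᵀx ≤ bᵀx̄^s` and hence `√(bᵀx) ≤ (1/ε)√(bᵀx̄^s)` (using `ε ≤ √ε`). Thus the index of `x`
is at most `s + (1/ε)√(bᵀx̄^s)`, which is at most the value at `s*`, and `s* ≤ aᵀx̄^{s*}`.
-/

namespace Real

theorem sqrt_le_one_div_mul_sqrt_of_mul_le {ε u v : ℝ} (hε0 : 0 < ε) (hε1 : ε ≤ 1)
    (h : ε * u ≤ v) : √u ≤ 1 / ε * √v := by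
  have hu : u ≤ v / ε := (le_div_iff₀' hε0).mpr h
  have hε_le_sqrt : ε ≤ √ε := le_sqrt_of_sq_le (by nlinarith)
  calc √u ≤ √(v / ε) := sqrt_le_sqrt hu
    _ = √v / √ε := sqrt_div' v hε0.le
    _ ≤ √v / ε := div_le_div_of_nonneg_left (sqrt_nonneg v) hε0 hε_le_sqrt
    _ = 1 / ε * √v := by ring

end Real

theorem budget_maximization_general (d N : ℕ) (X : Finset (Fin d → ℝ))
    (a : Fin d → ℕ) (b : Fin d → ℝ)
    (hrange : ∀ x ∈ X, ∃ s : ℕ, s ≤ N ∧ ∑ i, (a i : ℝ) * x i = (s : ℝ))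
    (ε : ℝ) (hε0 : 0 < ε) (hε1 : ε ≤ 1)
    (xbar : ℕ → (Fin d → ℝ))
    (hxbar : ∀ s ≤ N, xbar s ∈ X ∧ (s : ℝ) ≤ ∑ i, (a i : ℝ) * xbar s i ∧
      ∀ x ∈ X, (s : ℝ) ≤ ∑ i, (a i : ℝ) * x i →
        ε * ∑ i, b i * x i ≤ ∑ i, b i * xbar s i)
    (sstar : ℕ) (hsstar : sstar ≤ N)
    (hopt : ∀ s ≤ N, (s : ℝ) + (1 / ε) * Real.sqrt (∑ i, b i * xbar s i)
      ≤ (sstar : ℝ) + (1 / ε) * Real.sqrt (∑ i, b i * xbar sstar i)) :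
    ∀ x ∈ X, ∑ i, (a i : ℝ) * x i + Real.sqrt (∑ i, b i * x i)
      ≤ ∑ i, (a i : ℝ) * xbar sstar i + (1 / ε) * Real.sqrt (∑ i, b i * xbar sstar i) := by
  intro x hx
  obtain ⟨s, hsN, hs⟩ := hrange x hx
  have happrox : ε * ∑ i, b i * x i ≤ ∑ i, b i * xbar s i :=
    (hxbar s hsN).2.2 x hx hs.ge
  calc ∑ i, (a i : ℝ) * x i + Real.sqrt (∑ i, b i * x i)
      ≤ (s : ℝ) + (1 / ε) * Real.sqrt (∑ i, b i * xbar s i) := by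
        rw [hs]
        gcongr
        exact Real.sqrt_le_one_div_mul_sqrt_of_mul_le hε0 hε1 happrox
    _ ≤ (sstar : ℝ) + (1 / ε) * Real.sqrt (∑ i, b i * xbar sstar i) := hopt s hsN
    _ ≤ ∑ i, (a i : ℝ) * xbar sstar i + (1 / ε) * Real.sqrt (∑ i, b i * xbar sstar i) := by
        gcongr
        exact (hxbar sstar hsstar).2.1

/-- Maximizing over budgets the value `s + (1/ε)√(bᵀx̄^s)`, where `x̄^s` is an
`ε`-approximate solution of the budgeted linear maximization, yields an
approximate maximizer of the index `aᵀx + √(bᵀx)` over `X`. -/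
theorem budget_maximization (d N : ℕ) (X : Finset (Fin d → ℝ)) (hXne : X.Nonempty)
    (hXbin : ∀ x ∈ X, ∀ i, x i = 0 ∨ x i = 1)
    (a : Fin d → ℕ) (b : Fin d → ℝ) (hb : ∀ i, 0 ≤ b i)
    (hrange : ∀ x ∈ X, ∃ s : ℕ, s ≤ N ∧ ∑ i, (a i : ℝ) * x i = (s : ℝ))
    (ε : ℝ) (hε0 : 0 < ε) (hε1 : ε ≤ 1)
    (xbar : ℕ → (Fin d → ℝ))
    (hxbar : ∀ s ≤ N, xbar s ∈ X ∧ (s : ℝ) ≤ ∑ i, (a i : ℝ) * xbar s i ∧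
      ∀ x ∈ X, (s : ℝ) ≤ ∑ i, (a i : ℝ) * x i →
        ε * ∑ i, b i * x i ≤ ∑ i, b i * xbar s i)
    (sstar : ℕ) (hsstar : sstar ≤ N)
    (hopt : ∀ s ≤ N, (s : ℝ) + (1 / ε) * Real.sqrt (∑ i, b i * xbar s i)
      ≤ (sstar : ℝ) + (1 / ε) * Real.sqrt (∑ i, b i * xbar sstar i)) :
    ∀ x ∈ X, ∑ i, (a i : ℝ) * x i + Real.sqrt (∑ i, b i * x i)
      ≤ ∑ i, (a i : ℝ) * xbar sstar i + (1 / ε) * Real.sqrt (∑ i, b i * xbar sstar i) :=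
  budget_maximization_general d N X a b hrange ε hε0 hε1 xbar hxbar sstar hsstar hopt
end
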